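/- Shuffle exponential bound on group-like elements: for a shuffle-compatible partition, if u ∈ 𝒮(S)* then exp_⧢(u) ∈ 𝒮(S)*, |exp_⧢(u)|_x ≤ exp(|u|_x), and exp(⟨u,x⟩) = ⟨exp_⧢(u), x⟩ for each group-like x ∈ 𝒮(S). -/

import Mathlib

/-- The extended tensor algebra `T((ℝ^d))`. -/
abbrev TA (d : ℕ) := List (Fin d) → ℝ

/-- The subword of `K` obtained by keeping exactly the positions in `s`. -/
def subword {d : ℕ} (K : List (Fin d)) (s : Finset (Fin K.length)) : List (Fin d) :=
  ((List.finRange K.length).filter (fun i => i ∈ s)).map (fun i => K.get i)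

/-- The shuffle product on `T((ℝ^d))`. -/
noncomputable def shMul {d : ℕ} (u v : TA d) : TA d :=
  fun K => ∑ s : Finset (Fin K.length), u (subword K s) * v (subword K sᶜ)

/-- The basis element `e_I`. -/
def delta {d : ℕ} (I : List (Fin d)) : TA d := fun J => if J = I then 1 else 0

/-- The set `𝒮(S)` of group-like elements with first level in `S`. -/
noncomputable def GroupLikeSet {d : ℕ} (S : Set (Fin d → ℝ)) : Set (TA d) :=
  {x | x [] = 1 ∧ (fun i => x [i]) ∈ S ∧
    ∀ I J : List (Fin d), x I * x J = ∑' K : List (Fin d), shMul (delta I) (delta J) K * x K}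

/-- Partitions of the set of all words, given by an index map `part`; each block contains
only words of one fixed length. -/
def SameLengthBlocks {d : ℕ} (part : List (Fin d) → ℕ) : Prop :=
  ∀ I J : List (Fin d), part I = part J → I.length = J.length

/-- Shuffle-compatibility of a partition: the shuffle of two blocks is supported in a
single block. -/
noncomputable def ShuffleCompatible {d : ℕ} (part : List (Fin d) → ℕ) : Prop :=
  ∀ k₁ k₂ : ℕ, ∃ k : ℕ, ∀ I J : List (Fin d), part I = k₁ → part J = k₂ →
    ∀ K : List (Fin d), shMul (delta I) (delta J) K ≠ 0 → part K = k

/-- The block sum `Σ_{I ∈ Π_k} u_I x_I`. -/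
noncomputable def blockSum {d : ℕ} (part : List (Fin d) → ℕ) (u x : TA d) (k : ℕ) : ℝ :=
  ∑' I : {I : List (Fin d) // part I = k}, u I * x I

/-- The semi-norm `|u|_x = Σ_k |Σ_{I ∈ Π_k} u_I x_I|`. -/
noncomputable def seminorm' {d : ℕ} (part : List (Fin d) → ℕ) (u x : TA d) : ℝ :=
  ∑' k : ℕ, |blockSum part u x k|

/-- Membership `u ∈ 𝒮(S)*`: `|u|_x < ∞` for every group-like `x`. -/
noncomputable def DualMem {d : ℕ} (part : List (Fin d) → ℕ) (S : Set (Fin d → ℝ))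
    (u : TA d) : Prop :=
  ∀ x ∈ GroupLikeSet S, Summable (fun k => |blockSum part u x k|)

/-- The level-`n` pairing `⟨π_n(u), π_n(x)⟩`. -/
noncomputable def levelPair {d : ℕ} (u x : TA d) (n : ℕ) : ℝ :=
  ∑' I : {I : List (Fin d) // I.length = n}, u I * x I

/-- The pairing `⟨u, x⟩ = Σ_n ⟨π_n(u), π_n(x)⟩`. -/
noncomputable def pairTA {d : ℕ} (u x : TA d) : ℝ := ∑' n : ℕ, levelPair u x n


/-- The unit `e_∅` of the shuffle algebra. -/
def emptyWordUnit {d : ℕ} : TA d := fun K => if K = [] then 1 else 0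

/-- `ū := u − u_∅ e_∅`. -/
def bar {d : ℕ} (u : TA d) : TA d := fun K => if K = [] then 0 else u K

/-- Shuffle powers `u^{⧢k}`. -/
noncomputable def shPow {d : ℕ} (u : TA d) : ℕ → TA d
  | 0 => emptyWordUnit
  | k + 1 => shMul (shPow u k) u

/-- The shuffle exponential `exp_⧢(u) = Σ_{k≥0} u^{⧢k}/k!`; each component is a finite
sum. -/
noncomputable def shExp {d : ℕ} (u : TA d) : TA d :=
  fun K => Real.exp (u []) *
    ∑ k ∈ Finset.range (K.length + 1), shPow (bar u) k K / (Nat.factorial k : ℝ)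

/-!
By shuffle compatibility, all shuffles of a word of block `Π_a` with a word of block `Π_b` lie
in a single block `Π_c`, `c = c(a, b)`, so the shuffle relation of a group-like `x` gives
`Σ_{K ∈ Π_c} (u|Π_a ⧢ v|Π_b)_K x_K = (Σ_{I ∈ Π_a} u_I x_I) (Σ_{J ∈ Π_b} v_J x_J)`. The block
sums of `u ⧢ v` are therefore the convolution, along `c`, of those of `u` and `v`; this gives
`|u ⧢ v|_x ≤ |u|_x |v|_x` together with `⟨u ⧢ v, x⟩ = ⟨u, x⟩ ⟨v, x⟩`, and by induction the same
for shuffle powers. Writing `exp_⧢(u) = e^{u_∅} Σ_k ū^{⧢k} / k!`, both claims follow by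
exchanging the absolutely convergent double series over `k` and over the blocks.
-/

open Finset

section Series

variable {α β γ : Type*}

theorem tsum_subtype_eq_sum_of_mem_iff (f : α → ℝ) {p : α → Prop} (s : Finset α)
    (hs : ∀ a, a ∈ s ↔ p a) : ∑' a : {a // p a}, f a = ∑ a ∈ s, f a := by
  rw [← Finset.tsum_subtype s f, ← (Equiv.subtypeEquivRight hs).tsum_eq]
  rfl

theorem tsum_ite_eq_tsum_preimage [DecidableEq β] (f : α → ℝ) (g : α → β) (b : β) :
    ∑' a, (if g a = b then f a else 0) = ∑' a : ↥(g ⁻¹' {b}), f a := by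
  rw [_root_.tsum_subtype]
  exact tsum_congr fun a => by by_cases h : g a = b <;> simp [h]

theorem summable_abs_and_hasSum_of_eq_tsum_fiber [DecidableEq γ] (g : α × β → γ)
    {a : α → ℝ} {b : β → ℝ} {c : γ → ℝ} (ha : Summable fun i => |a i|)
    (hb : Summable fun j => |b j|)
    (hc : ∀ k, c k = ∑' q, if g q = k then a q.1 * b q.2 else 0) :
    Summable (fun k => |c k|) ∧ ∑' k, |c k| ≤ (∑' i, |a i|) * ∑' j, |b j| ∧
      HasSum c ((∑' i, a i) * ∑' j, b j) := by
  have habs : Summable fun q : α × β => |a q.1 * b q.2| := by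
    simpa only [abs_mul] using ha.mul_of_nonneg hb (fun _ => abs_nonneg _) fun _ => abs_nonneg _
  have hc' : ∀ k, c k = ∑' q : ↥(g ⁻¹' {k}), a q.1.1 * b q.1.2 := fun k =>
    (hc k).trans (tsum_ite_eq_tsum_preimage _ g k)
  have hfiber_abs := habs.hasSum.tsum_fiberwise g
  have hle : ∀ k, |c k| ≤ ∑' q : ↥(g ⁻¹' {k}), |a q.1.1 * b q.1.2| := fun k => by
    simpa only [hc', Real.norm_eq_abs] using
      norm_tsum_le_tsum_norm (f := fun q : ↥(g ⁻¹' {k}) => a q.1.1 * b q.1.2)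
        (by simp only [Real.norm_eq_abs]; exact habs.subtype (g ⁻¹' {k}))
  have hsummable : Summable fun k => |c k| :=
    .of_nonneg_of_le (fun _ => abs_nonneg _) hle hfiber_abs.summable
  have hprod : ∀ (f : α → ℝ) (h : β → ℝ), Summable (‖f ·‖) → Summable (‖h ·‖) →
      (∑' i, f i) * ∑' j, h j = ∑' q : α × β, f q.1 * h q.2 :=
    fun f h hf hh => tsum_mul_tsum_of_summable_norm hf hh
  refine ⟨hsummable, ?_, ?_⟩
  · calc ∑' k, |c k| ≤ ∑' k, ∑' q : ↥(g ⁻¹' {k}), |a q.1.1 * b q.1.2| :=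
          hsummable.tsum_le_tsum hle hfiber_abs.summable
      _ = ∑' q : α × β, |a q.1| * |b q.2| := by rw [hfiber_abs.tsum_eq]; simp only [abs_mul]
      _ = (∑' i, |a i|) * ∑' j, |b j| :=
          (hprod (|a ·|) (|b ·|) (by simpa using ha) (by simpa using hb)).symm
  · rw [hprod a b (by simpa using ha) (by simpa using hb), funext hc']
    exact (summable_abs_iff.mp habs).hasSum.tsum_fiberwise g

theorem summable_abs_and_hasSum_tsum_of_row_bound {A : α → β → ℝ} {r : α → ℝ}
    (hr : Summable r) (hrow : ∀ j, Summable fun m => |A j m|)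
    (hle : ∀ j, ∑' m, |A j m| ≤ r j) :
    Summable (fun m => |∑' j, A j m|) ∧ ∑' m, |∑' j, A j m| ≤ ∑' j, r j ∧
      HasSum (fun m => ∑' j, A j m) (∑' j, ∑' m, A j m) := by
  have habs : Summable fun q : α × β => |A q.1 q.2| :=
    (summable_prod_of_nonneg fun _ => abs_nonneg _).mpr
      ⟨hrow, .of_nonneg_of_le (fun _ => tsum_nonneg fun _ => abs_nonneg _) hle hr⟩
  have hswap : Summable fun q : β × α => |A q.2 q.1| :=
    (Equiv.prodComm β α).summable_iff (f := fun q : α × β => |A q.1 q.2|) |>.mpr habs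
  have hcol : ∀ m, |∑' j, A j m| ≤ ∑' j, |A j m| := fun m => by
    simpa only [Real.norm_eq_abs] using
      norm_tsum_le_tsum_norm (f := (A · m))
        (by simp only [Real.norm_eq_abs]; exact hswap.prod_factor m)
  have hsummable : Summable fun m => |∑' j, A j m| :=
    .of_nonneg_of_le (fun _ => abs_nonneg _) hcol hswap.prod
  refine ⟨hsummable, ?_, ?_⟩
  · calc ∑' m, |∑' j, A j m| ≤ ∑' m, ∑' j, |A j m| := hsummable.tsum_le_tsum hcol hswap.prod
      _ = ∑' j, ∑' m, |A j m| := habs.tsum_comm (f := fun j m => |A j m|)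
      _ ≤ ∑' j, r j := habs.prod.tsum_le_tsum hle hr
  · rw [← (summable_abs_iff.mp habs).tsum_comm (f := A)]
    exact (summable_abs_iff.mp hswap).prod.hasSum

theorem hasSum_pow_div_factorial_exp (r : ℝ) :
    HasSum (fun n => r ^ n / (n.factorial : ℝ)) (Real.exp r) := by
  simpa [Real.exp_eq_exp_ℝ] using NormedSpace.expSeries_div_hasSum_exp r

end Series

section Words

variable {d : ℕ}

theorem subword_length (K : List (Fin d)) (s : Finset (Fin K.length)) :
    (subword K s).length = #s := by
  rw [subword, List.length_map, ← List.toFinset_card_of_nodup ((List.nodup_finRange _).filter _)]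
  congr 1
  ext i
  simp

theorem length_subword_add_length_subword_compl (K : List (Fin d))
    (s : Finset (Fin K.length)) : (subword K s).length + (subword K sᶜ).length = K.length := by
  rw [subword_length, subword_length, card_add_card_compl, Fintype.card_fin]

theorem shPow_apply_eq_zero_of_length_lt {w : TA d} (hw : w [] = 0) {k : ℕ} :
    ∀ {K : List (Fin d)}, K.length < k → shPow w k K = 0 := by
  induction k with
  | zero => exact fun h => absurd h (Nat.not_lt_zero _)
  | succ k ih =>
    intro K hK
    rw [shPow, shMul]
    refine sum_eq_zero fun s _ => ?_
    by_cases hs : subword K sᶜ = []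
    · rw [hs, hw, mul_zero]
    · have hsplit := length_subword_add_length_subword_compl K s
      have hcompl := List.length_pos_iff.mpr hs
      rw [ih (by omega), zero_mul]

noncomputable def wordsOfLength (d n : ℕ) : Finset (List (Fin d)) :=
  (List.finite_length_eq (Fin d) n).toFinset

@[simp]
theorem mem_wordsOfLength {n : ℕ} {I : List (Fin d)} : I ∈ wordsOfLength d n ↔ I.length = n :=
  Set.Finite.mem_toFinset _

variable (part : List (Fin d) → ℕ)

/-- The common length of the words in block `k` (junk value `0` for an empty block). -/
noncomputable def blockLength (k : ℕ) : ℕ :=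
  open Classical in if h : ∃ I, part I = k then h.choose.length else 0

noncomputable def blockFinset (k : ℕ) : Finset (List (Fin d)) :=
  (wordsOfLength d (blockLength part k)).filter (part · = k)

def restrictBlock (u : TA d) (k : ℕ) : TA d := fun I => if part I = k then u I else 0

noncomputable def lowBlocks (n : ℕ) : Finset ℕ :=
  (List.finite_length_le (Fin d) n).toFinset.image part

variable {part}

theorem blockLength_eq (hlen : SameLengthBlocks part) {I : List (Fin d)} {k : ℕ}
    (h : part I = k) : blockLength part k = I.length := by
  have hex : ∃ I, part I = k := ⟨I, h⟩
  rw [blockLength, dif_pos hex]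
  exact hlen _ _ (hex.choose_spec.trans h.symm)

theorem mem_blockFinset (hlen : SameLengthBlocks part) {k : ℕ} {I : List (Fin d)} :
    I ∈ blockFinset part k ↔ part I = k := by
  simp only [blockFinset, mem_filter, mem_wordsOfLength, and_iff_right_iff_imp]
  exact fun h => (blockLength_eq hlen h).symm

theorem length_of_mem_blockFinset {k : ℕ} {I : List (Fin d)} (h : I ∈ blockFinset part k) :
    I.length = blockLength part k :=
  mem_wordsOfLength.mp (mem_filter.mp h).1

theorem blockSum_eq_sum (hlen : SameLengthBlocks part) (u x : TA d) (k : ℕ) :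
    blockSum part u x k = ∑ I ∈ blockFinset part k, u I * x I :=
  tsum_subtype_eq_sum_of_mem_iff (fun I => u I * x I) _ fun _ => mem_blockFinset hlen

theorem levelPair_eq_sum (u x : TA d) (n : ℕ) :
    levelPair u x n = ∑ I ∈ wordsOfLength d n, u I * x I :=
  tsum_subtype_eq_sum_of_mem_iff (fun I => u I * x I) _ fun _ => mem_wordsOfLength

theorem sum_blockFinset_mul_delta (hlen : SameLengthBlocks part) (u : TA d) (k : ℕ)
    (w : List (Fin d)) : ∑ I ∈ blockFinset part k, u I * delta I w = restrictBlock part u k w := by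
  simp only [delta, mul_ite, mul_one, mul_zero, sum_ite_eq, mem_blockFinset hlen, restrictBlock]

end Words

section Shuffle

variable {d : ℕ} {part : List (Fin d) → ℕ}

theorem sum_restrictBlock_apply (u : TA d) {s : Finset ℕ} {w : List (Fin d)}
    (hw : part w ∈ s) : ∑ k ∈ s, restrictBlock part u k w = u w := by
  simp [restrictBlock, hw]

theorem mem_lowBlocks {n k : ℕ} :
    k ∈ lowBlocks part n ↔ ∃ I : List (Fin d), I.length ≤ n ∧ part I = k := by
  simp [lowBlocks]

theorem part_subword_mem_lowBlocks (K : List (Fin d)) (s : Finset (Fin K.length)) :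
    part (subword K s) ∈ lowBlocks part K.length :=
  mem_lowBlocks.mpr ⟨_, by simpa [subword_length] using card_le_univ s, rfl⟩

theorem shMul_eq_sum_restrictBlock (u v : TA d) (K : List (Fin d)) :
    shMul u v K = ∑ q ∈ lowBlocks part K.length ×ˢ lowBlocks part K.length,
      shMul (restrictBlock part u q.1) (restrictBlock part v q.2) K := by
  simp only [shMul]
  rw [sum_comm]
  refine sum_congr rfl fun s _ => ?_
  rw [← sum_restrictBlock_apply u (part_subword_mem_lowBlocks K s),
    ← sum_restrictBlock_apply v (part_subword_mem_lowBlocks K sᶜ), sum_mul_sum, sum_product]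

theorem shMul_restrictBlock_eq_zero (u v : TA d) {a b : ℕ} {K : List (Fin d)}
    (h : (a, b) ∉ lowBlocks part K.length ×ˢ lowBlocks part K.length) :
    shMul (restrictBlock part u a) (restrictBlock part v b) K = 0 := by
  refine sum_eq_zero fun s _ => ?_
  simp only [restrictBlock, mul_ite, ite_mul, mul_zero, zero_mul]
  split_ifs with hb ha
  · exact absurd (mem_product.mpr ⟨ha ▸ part_subword_mem_lowBlocks K s,
      hb ▸ part_subword_mem_lowBlocks K sᶜ⟩) h
  all_goals rfl

noncomputable def shuffleBlock (hcompat : ShuffleCompatible part) (a b : ℕ) : ℕ :=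
  (hcompat a b).choose

theorem shMul_delta_eq_zero_of_part_ne (hcompat : ShuffleCompatible part)
    {I J K : List (Fin d)} (h : part K ≠ shuffleBlock hcompat (part I) (part J)) :
    shMul (delta I) (delta J) K = 0 :=
  not_imp_comm.mp ((hcompat (part I) (part J)).choose_spec I J rfl rfl K) h

theorem shMul_restrictBlock_apply (hlen : SameLengthBlocks part) (u v : TA d) (a b : ℕ)
    (K : List (Fin d)) :
    shMul (restrictBlock part u a) (restrictBlock part v b) K =
      ∑ I ∈ blockFinset part a, ∑ J ∈ blockFinset part b,
        u I * v J * shMul (delta I) (delta J) K := by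
  simp only [shMul, ← sum_blockFinset_mul_delta hlen, sum_mul_sum]
  simp only [mul_sum]
  rw [sum_comm]
  refine sum_congr rfl fun I _ => ?_
  rw [sum_comm]
  exact sum_congr rfl fun J _ => sum_congr rfl fun s _ => by ring

variable {Sset : Set (Fin d → ℝ)} {x : TA d}

theorem sum_blockFinset_shMul_delta_mul (hlen : SameLengthBlocks part)
    (hcompat : ShuffleCompatible part) (hx : x ∈ GroupLikeSet Sset) (I J : List (Fin d))
    (m : ℕ) : ∑ K ∈ blockFinset part m, shMul (delta I) (delta J) K * x K =
      if shuffleBlock hcompat (part I) (part J) = m then x I * x J else 0 := by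
  split_ifs with h
  · rw [hx.2.2 I J, tsum_eq_sum fun K hK => ?_]
    rw [shMul_delta_eq_zero_of_part_ne hcompat (h ▸ mt (mem_blockFinset hlen).mpr hK), zero_mul]
  · refine sum_eq_zero fun K hK => ?_
    rw [shMul_delta_eq_zero_of_part_ne hcompat ((mem_blockFinset hlen).mp hK ▸ Ne.symm h),
      zero_mul]

theorem sum_blockFinset_shMul_restrictBlock_mul (hlen : SameLengthBlocks part)
    (hcompat : ShuffleCompatible part) (hx : x ∈ GroupLikeSet Sset) (u v : TA d)
    (a b m : ℕ) :
    ∑ K ∈ blockFinset part m, shMul (restrictBlock part u a) (restrictBlock part v b) K * x K =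
      if shuffleBlock hcompat a b = m then blockSum part u x a * blockSum part v x b else 0 := by
  have hterm : ∀ I ∈ blockFinset part a, ∀ J ∈ blockFinset part b,
      ∑ K ∈ blockFinset part m, u I * v J * shMul (delta I) (delta J) K * x K =
        if shuffleBlock hcompat a b = m then u I * x I * (v J * x J) else 0 := by
    intro I hI J hJ
    simp only [mul_assoc, ← mul_sum, sum_blockFinset_shMul_delta_mul hlen hcompat hx,
      (mem_blockFinset hlen).mp hI, (mem_blockFinset hlen).mp hJ]
    split_ifs <;> ring
  simp only [shMul_restrictBlock_apply hlen, sum_mul]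
  rw [sum_comm, sum_congr rfl fun I hI => (sum_comm.trans (sum_congr rfl (hterm I hI)))]
  split_ifs
  · rw [blockSum_eq_sum hlen, blockSum_eq_sum hlen, sum_mul_sum]
  · simp

end Shuffle

section BlockSums

variable {d : ℕ} {part : List (Fin d) → ℕ} {Sset : Set (Fin d → ℝ)} {x : TA d}

theorem blockSum_shMul (hlen : SameLengthBlocks part) (hcompat : ShuffleCompatible part)
    (hx : x ∈ GroupLikeSet Sset) (u v : TA d) (m : ℕ) :
    blockSum part (shMul u v) x m = ∑' q : ℕ × ℕ,
      if shuffleBlock hcompat q.1 q.2 = m then blockSum part u x q.1 * blockSum part v x q.2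
      else 0 := by
  have hterm (q : ℕ × ℕ) :=
    (sum_blockFinset_shMul_restrictBlock_mul hlen hcompat hx u v q.1 q.2 m).symm
  set n := blockLength part m
  rw [tsum_eq_sum (s := lowBlocks part n ×ˢ lowBlocks part n) fun q hq => ?_,
    blockSum_eq_sum hlen]
  · simp only [hterm]
    rw [sum_comm]
    refine sum_congr rfl fun K hK => ?_
    rw [← sum_mul, shMul_eq_sum_restrictBlock u v K, length_of_mem_blockFinset hK]
  · rw [hterm]
    refine sum_eq_zero fun K hK => ?_
    rw [shMul_restrictBlock_eq_zero u v (by rwa [length_of_mem_blockFinset hK]), zero_mul]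

theorem seminorm'_shMul_le_and_hasSum (hlen : SameLengthBlocks part)
    (hcompat : ShuffleCompatible part) (hx : x ∈ GroupLikeSet Sset) {u v : TA d}
    (hu : Summable fun k => |blockSum part u x k|)
    (hv : Summable fun k => |blockSum part v x k|) :
    Summable (fun k => |blockSum part (shMul u v) x k|) ∧
      seminorm' part (shMul u v) x ≤ seminorm' part u x * seminorm' part v x ∧
      HasSum (blockSum part (shMul u v) x)
        ((∑' k, blockSum part u x k) * ∑' k, blockSum part v x k) :=
  summable_abs_and_hasSum_of_eq_tsum_fiber (fun q => shuffleBlock hcompat q.1 q.2) hu hv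
    (blockSum_shMul hlen hcompat hx u v)

theorem blockSum_emptyWordUnit (hlen : SameLengthBlocks part) (hx : x ∈ GroupLikeSet Sset)
    (k : ℕ) : blockSum part emptyWordUnit x k = if k = part [] then 1 else 0 := by
  simp [blockSum_eq_sum hlen, emptyWordUnit, mem_blockFinset hlen, hx.1, eq_comm]

theorem seminorm'_shPow_le_and_hasSum (hlen : SameLengthBlocks part)
    (hcompat : ShuffleCompatible part) (hx : x ∈ GroupLikeSet Sset) {w : TA d}
    (hw : Summable fun k => |blockSum part w x k|) (j : ℕ) :
    Summable (fun k => |blockSum part (shPow w j) x k|) ∧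
      seminorm' part (shPow w j) x ≤ seminorm' part w x ^ j ∧
      HasSum (blockSum part (shPow w j) x) ((∑' k, blockSum part w x k) ^ j) := by
  induction j with
  | zero =>
    have hunit : HasSum (blockSum part (shPow w 0) x) 1 := by
      simpa only [shPow, funext (blockSum_emptyWordUnit hlen hx)] using hasSum_ite_eq _ _
    have habs : HasSum (fun k => |blockSum part (shPow w 0) x k|) 1 := by
      simpa only [shPow, blockSum_emptyWordUnit hlen hx, apply_ite, abs_one, abs_zero]
        using hasSum_ite_eq _ _
    exact ⟨habs.summable, by rw [seminorm', habs.tsum_eq, pow_zero], by rwa [pow_zero]⟩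
  | succ j ih =>
    obtain ⟨hsummable, hle, hsum⟩ := seminorm'_shMul_le_and_hasSum hlen hcompat hx ih.1 hw
    refine ⟨hsummable, hle.trans ?_, by rwa [pow_succ, ← ih.2.2.tsum_eq]⟩
    rw [pow_succ]
    exact mul_le_mul_of_nonneg_right ih.2.1 (tsum_nonneg fun _ => abs_nonneg _)

theorem blockSum_bar (hlen : SameLengthBlocks part) (u : TA d) (k : ℕ) :
    blockSum part (bar u) x k = if k = part [] then 0 else blockSum part u x k := by
  rw [blockSum_eq_sum hlen, blockSum_eq_sum hlen]
  split_ifs with h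
  · refine sum_eq_zero fun I hI => ?_
    rw [List.length_eq_zero_iff.mp (hlen _ [] (((mem_blockFinset hlen).mp hI).trans h)), bar,
      if_pos rfl, zero_mul]
  · refine sum_congr rfl fun I hI => ?_
    rw [bar, if_neg]
    rintro rfl
    exact h ((mem_blockFinset hlen).mp hI).symm

theorem blockSum_part_nil (hlen : SameLengthBlocks part) (hx : x ∈ GroupLikeSet Sset)
    (u : TA d) : blockSum part u x (part []) = u [] := by
  rw [blockSum_eq_sum hlen, sum_eq_single_of_mem [] ((mem_blockFinset hlen).mpr rfl), hx.1,
    mul_one]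
  intro I hI hne
  exact absurd (List.length_eq_zero_iff.mp (hlen _ [] ((mem_blockFinset hlen).mp hI))) hne

theorem blockSum_shExp (hlen : SameLengthBlocks part) (u : TA d) (m : ℕ) :
    blockSum part (shExp u) x m =
      Real.exp (u []) * ∑' j, blockSum part (shPow (bar u) j) x m / (Nat.factorial j : ℝ) := by
  have hvanish : ∀ j ∉ range (blockLength part m + 1),
      blockSum part (shPow (bar u) j) x m / (Nat.factorial j : ℝ) = 0 := by
    intro j hj
    rw [blockSum_eq_sum hlen, sum_eq_zero fun K hK => ?_, zero_div]
    rw [shPow_apply_eq_zero_of_length_lt (by simp [bar]) ?_, zero_mul]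
    rw [length_of_mem_blockFinset hK]
    simpa [Nat.lt_succ_iff] using hj
  rw [tsum_eq_sum hvanish]
  simp only [blockSum_eq_sum hlen, sum_div, mul_sum]
  rw [sum_comm]
  refine sum_congr rfl fun K hK => ?_
  simp only [shExp, length_of_mem_blockFinset hK, sum_mul, mul_sum]
  exact sum_congr rfl fun j _ => by ring

theorem levelPair_eq_tsum (hlen : SameLengthBlocks part) (u : TA d) (n : ℕ) :
    levelPair u x n = ∑' k, if blockLength part k = n then blockSum part u x k else 0 := by
  set L := (wordsOfLength d n).image part
  have hlength : ∀ k ∈ L, blockLength part k = n := fun k hk => by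
    obtain ⟨I, hI, rfl⟩ := mem_image.mp hk
    rw [blockLength_eq hlen rfl, mem_wordsOfLength.mp hI]
  have hzero : ∀ k ∉ L, (if blockLength part k = n then blockSum part u x k else 0) = 0 := by
    intro k hk
    split_ifs with hn
    · rw [blockSum_eq_sum hlen]
      refine sum_eq_zero fun I hI => absurd (mem_image.mpr ⟨I, ?_, ?_⟩) hk
      · rw [mem_wordsOfLength, length_of_mem_blockFinset hI, hn]
      · exact (mem_blockFinset hlen).mp hI
    · rfl
  rw [tsum_eq_sum hzero, levelPair_eq_sum,
    ← sum_fiberwise_of_maps_to fun I hI => mem_image_of_mem part hI]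
  refine sum_congr rfl fun k hk => ?_
  rw [if_pos (hlength k hk), blockSum_eq_sum hlen, blockFinset, hlength k hk]

theorem pairTA_eq_tsum_blockSum (hlen : SameLengthBlocks part) {u : TA d}
    (hu : Summable (blockSum part u x)) : pairTA u x = ∑' k, blockSum part u x k := by
  simp only [pairTA, levelPair_eq_tsum hlen, tsum_ite_eq_tsum_preimage]
  exact (hu.hasSum.tsum_fiberwise _).tsum_eq

theorem abs_blockSum_bar_le (hlen : SameLengthBlocks part) (u : TA d) (k : ℕ) :
    |blockSum part (bar u) x k| ≤ |blockSum part u x k| := by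
  rw [blockSum_bar hlen]
  split_ifs
  · exact abs_zero.trans_le (abs_nonneg _)
  · rfl

theorem seminorm'_eq_abs_add_seminorm'_bar (hlen : SameLengthBlocks part)
    (hx : x ∈ GroupLikeSet Sset) {u : TA d} (hu : Summable fun k => |blockSum part u x k|) :
    seminorm' part u x = |u []| + seminorm' part (bar u) x := by
  rw [seminorm', hu.tsum_eq_add_tsum_ite (part []), blockSum_part_nil hlen hx, seminorm']
  simp only [blockSum_bar hlen, apply_ite abs, abs_zero]

theorem tsum_blockSum_eq_add_tsum_bar (hlen : SameLengthBlocks part)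
    (hx : x ∈ GroupLikeSet Sset) {u : TA d} (hu : Summable (blockSum part u x)) :
    ∑' k, blockSum part u x k = u [] + ∑' k, blockSum part (bar u) x k := by
  rw [hu.tsum_eq_add_tsum_ite (part []), blockSum_part_nil hlen hx]
  simp only [blockSum_bar hlen]

theorem seminorm'_shExp_le_and_hasSum (hlen : SameLengthBlocks part)
    (hcompat : ShuffleCompatible part) (hx : x ∈ GroupLikeSet Sset) {u : TA d}
    (hu : Summable fun k => |blockSum part u x k|) :
    Summable (fun k => |blockSum part (shExp u) x k|) ∧
      seminorm' part (shExp u) x ≤ Real.exp (seminorm' part u x) ∧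
      HasSum (blockSum part (shExp u) x) (Real.exp (∑' k, blockSum part u x k)) := by
  have hw : Summable fun k => |blockSum part (bar u) x k| :=
    hu.of_nonneg_of_le (fun _ => abs_nonneg _) (abs_blockSum_bar_le hlen u)
  have hpow := seminorm'_shPow_le_and_hasSum hlen hcompat hx hw
  set A : ℕ → ℕ → ℝ := fun j m => blockSum part (shPow (bar u) j) x m / (Nat.factorial j : ℝ)
  obtain ⟨hsummable, hle, hhasSum⟩ := summable_abs_and_hasSum_tsum_of_row_bound (A := A)
    (Real.summable_pow_div_factorial (seminorm' part (bar u) x))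
    (fun j => by simpa only [A, abs_div, Nat.abs_cast] using (hpow j).1.div_const _)
    (fun j => by
      simp only [A, abs_div, Nat.abs_cast, tsum_div_const]
      exact div_le_div_of_nonneg_right (hpow j).2.1 (Nat.cast_nonneg _))
  have hexp : ∀ m, blockSum part (shExp u) x m = Real.exp (u []) * ∑' j, A j m :=
    blockSum_shExp hlen u
  have hrows : ∑' j, ∑' m, A j m = Real.exp (∑' k, blockSum part (bar u) x k) := by
    simp only [A, tsum_div_const, fun j => ((hpow j).2.2).tsum_eq]
    exact (hasSum_pow_div_factorial_exp _).tsum_eq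
  refine ⟨by simpa only [hexp, abs_mul] using hsummable.mul_left _, ?_, ?_⟩
  · calc seminorm' part (shExp u) x = Real.exp (u []) * ∑' m, |∑' j, A j m| := by
          simp only [seminorm', hexp, abs_mul, abs_of_pos (Real.exp_pos _), tsum_mul_left]
      _ ≤ Real.exp (u []) * Real.exp (seminorm' part (bar u) x) := by
          gcongr
          exact hle.trans (hasSum_pow_div_factorial_exp _).tsum_eq.le
      _ ≤ Real.exp (seminorm' part u x) := by
          rw [← Real.exp_add, seminorm'_eq_abs_add_seminorm'_bar hlen hx hu]
          gcongr
          exact le_abs_self _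
  · rw [funext hexp, tsum_blockSum_eq_add_tsum_bar hlen hx (summable_abs_iff.mp hu),
      Real.exp_add, ← hrows]
    exact hhasSum.mul_left _

end BlockSums

/-- for a shuffle-compatible partition, if `u ∈ 𝒮(S)*` then
`exp_⧢(u) ∈ 𝒮(S)*`, `|exp_⧢(u)|_x ≤ exp(|u|_x)`, and `exp(⟨u,x⟩) = ⟨exp_⧢(u),x⟩` for every
group-like `x`. -/
theorem shuffle_exponential_bound {d : ℕ}
    (Sset : Set (Fin d → ℝ)) (part : List (Fin d) → ℕ)
    (hlen : SameLengthBlocks part) (hcompat : ShuffleCompatible part)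
    (u : TA d) (hu : DualMem part Sset u) :
    DualMem part Sset (shExp u) ∧
    ∀ x ∈ GroupLikeSet Sset,
      seminorm' part (shExp u) x ≤ Real.exp (seminorm' part u x) ∧
      Real.exp (pairTA u x) = pairTA (shExp u) x := by
  refine ⟨fun x hx => (seminorm'_shExp_le_and_hasSum hlen hcompat hx (hu x hx)).1, fun x hx => ?_⟩
  obtain ⟨-, hle, hhasSum⟩ := seminorm'_shExp_le_and_hasSum hlen hcompat hx (hu x hx)
  refine ⟨hle, ?_⟩
  rw [pairTA_eq_tsum_blockSum hlen (summable_abs_iff.mp (hu x hx)),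
    pairTA_eq_tsum_blockSum hlen hhasSum.summable, hhasSum.tsum_eq]
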